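/- arXiv:1503.08653 — 3 statements merged into one kernel-verified Lean document; each statement's English description precedes it below -/
import Mathlib

section
/- The EEWPS density f(x) = αβλ h(x) e^{-αH(x)} (1 - e^{-αH(x)})^{β-1} C'(λ(1 - e^{-αH(x)})^β) / C(λ) can be written as the countable mixture f(x) = Σ_{n=1}^∞ p_n g_n(x), where p_n = a_n λ^n / C(λ) and g_n(x) = nαβ h(x) e^{-αH(x)} (1 - e^{-αH(x)})^{nβ - 1} is the EEW(α, nβ) density. -/
open Set

/-- The EEWPS density
`f x = α β λ h x * exp (-α H x) * (1 - exp (-α H x))^(β-1) * C' (λ (1 - exp (-α H x))^β) / C λ`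
is the countable mixture `f x = ∑' n, p n * g n x` where `p n = a n λ^n / C λ` and
`g n x = n α β h x * exp (-α H x) * (1 - exp (-α H x))^(n β - 1)` is the EEW(α, nβ) density. -/
theorem eewps_density_mixture
    (a : ℕ → ℝ) (lam s α β : ℝ) (C C' : ℝ → ℝ) (H h : ℝ → ℝ) (x : ℝ)
    (ha : ∀ n, 0 ≤ a n) (ha0 : a 0 = 0)
    (hα : 0 < α) (hβ : 0 < β) (hlam : lam ∈ Set.Ioo 0 s)
    (hx : 0 < x) (hh : ∀ y, 0 < y → HasDerivAt H (h y) y) (hHx : 0 < H x)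
    (hClam : HasSum (fun n : ℕ => a n * lam ^ n) (C lam)) (hCpos : 0 < C lam)
    (hC' : HasSum
      (fun n : ℕ => (n : ℝ) * a n * (lam * (1 - Real.exp (-(α * H x))) ^ β) ^ (n - 1))
      (C' (lam * (1 - Real.exp (-(α * H x))) ^ β))) :
    HasSum
      (fun n : ℕ => (a n * lam ^ n / C lam) *
        ((n : ℝ) * α * β * h x * Real.exp (-(α * H x)) *
          (1 - Real.exp (-(α * H x))) ^ ((n : ℝ) * β - 1)))
      (α * β * lam * h x * Real.exp (-(α * H x)) *
        (1 - Real.exp (-(α * H x))) ^ (β - 1) *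
        C' (lam * (1 - Real.exp (-(α * H x))) ^ β) / C lam) := by
  set E := Real.exp (-(α * H x)) with hEdef
  have hE1 : E < 1 := by
    rw [hEdef]
    have : -(α * H x) < 0 := by nlinarith
    exact Real.exp_lt_one_iff.mpr this
  set u : ℝ := 1 - E with hudef
  have hu : 0 < u := by simp [hudef]; linarith
  set c : ℝ := α * β * lam * h x * E * u ^ (β - 1) / C lam with hcdef
  have key : HasSum (fun n : ℕ => c * ((n : ℝ) * a n * (lam * u ^ β) ^ (n - 1)))
      (c * C' (lam * u ^ β)) := hC'.mul_left c
  have hfun : ∀ n : ℕ, (a n * lam ^ n / C lam) *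
      ((n : ℝ) * α * β * h x * E * u ^ ((n : ℝ) * β - 1))
      = c * ((n : ℝ) * a n * (lam * u ^ β) ^ (n - 1)) := by
    intro n
    cases n with
    | zero => simp
    | succ k =>
      have h1 : (lam * u ^ β) ^ k = lam ^ k * u ^ (β * (k : ℝ)) := by
        rw [mul_pow, ← Real.rpow_natCast (u ^ β) k, ← Real.rpow_mul hu.le]
      have h2 : u ^ ((((k : ℕ) + 1 : ℕ) : ℝ) * β - 1) = u ^ (β * (k : ℝ)) * u ^ (β - 1) := by
        rw [← Real.rpow_add hu]
        push_cast
        ring_nf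
      simp only [Nat.add_sub_cancel, h1, h2, hcdef]
      push_cast
      ring
  have hval : α * β * lam * h x * E * u ^ (β - 1) * C' (lam * u ^ β) / C lam
      = c * C' (lam * u ^ β) := by
    rw [hcdef]; ring
  rw [funext hfun, hval]
  exact key
end

section
/- Let c = min{n ∈ ℕ : a_n > 0}. Then for each fixed x ≥ 0, the EEWPS cdf F_λ(x) = C(λ(1 - e^{-αH(x)})^β)/C(λ) converges to (1 - e^{-αH(x)})^{cβ} as λ → 0⁺; i.e., the limiting distribution as λ → 0⁺ is EEW(α, cβ). -/
open Set Filter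
set_option maxHeartbeats 1000000

lemma eewps_aux (a : ℕ → ℝ) (s : ℝ) (c : ℕ) (ha : ∀ n, 0 ≤ a n) (hs : 0 < s)
    (hsum : ∀ u : ℝ, |u| < s → Summable (fun n : ℕ => a n * u ^ n))
    (hcmin : ∀ m, m < c → a m = 0) :
    Tendsto (fun u : ℝ => (∑' n : ℕ, a n * u ^ n) / u ^ c)
      (nhdsWithin 0 (Set.Ioi 0)) (nhds (a c)) := by
  set r : ℝ := s / 2 with hrdef
  have hr : 0 < r := by positivity
  have hrs : |r| < s := by
    rw [abs_of_pos hr]; simp [hrdef]; linarith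
  have hSr : Summable (fun n : ℕ => a n * r ^ n) := hsum r hrs
  have hSrc : Summable (fun n : ℕ => a (n + c) * r ^ (n + c)) :=
    (summable_nat_add_iff c).2 hSr
  have hSb : Summable (fun n : ℕ => a (n + c) * r ^ n) := by
    have h := hSrc.mul_right ((r : ℝ) ^ c)⁻¹
    refine h.congr fun n => ?_
    have : r ^ c ≠ 0 := pow_ne_zero _ hr.ne'
    field_simp [pow_add]
    ring
  have hSb1 : Summable (fun n : ℕ => a (n + 1 + c) * r ^ n) := by
    have h := ((summable_nat_add_iff 1).2 hSb).mul_right (r : ℝ)⁻¹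
    refine h.congr fun n => ?_
    field_simp [pow_succ]; ring
  set M : ℝ := ∑' n : ℕ, a (n + 1 + c) * r ^ n with hM
  set g : ℝ → ℝ := fun u => ∑' n : ℕ, a (n + c) * u ^ n with hg
  set T : ℝ → ℝ := fun u => ∑' n : ℕ, a (n + 1 + c) * u ^ (n + 1) with hT
  have hmem : Ioo (0:ℝ) r ∈ nhdsWithin (0:ℝ) (Set.Ioi 0) :=
    Ioo_mem_nhdsGT_of_mem ⟨le_refl 0, hr⟩
  -- summability for u in Ioo 0 r
  have key : ∀ u ∈ Ioo (0:ℝ) r, Summable (fun n : ℕ => a n * u ^ n) := by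
    intro u hu
    exact hsum u (by rw [abs_of_pos hu.1]; linarith [hu.2])
  have keyc : ∀ u ∈ Ioo (0:ℝ) r, Summable (fun n : ℕ => a (n + c) * u ^ (n + c)) :=
    fun u hu => (summable_nat_add_iff c).2 (key u hu)
  have keyb : ∀ u ∈ Ioo (0:ℝ) r, Summable (fun n : ℕ => a (n + c) * u ^ n) := by
    intro u hu
    have h := (keyc u hu).mul_right ((u : ℝ) ^ c)⁻¹
    refine h.congr fun n => ?_
    have : u ^ c ≠ 0 := pow_ne_zero _ hu.1.ne'
    field_simp [pow_add]
    ring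
  have keyb1 : ∀ u ∈ Ioo (0:ℝ) r, Summable (fun n : ℕ => a (n + 1 + c) * u ^ (n + 1)) := by
    intro u hu
    have h := ((summable_nat_add_iff 1).2 (keyb u hu))
    refine h.congr fun n => ?_
    ring_nf
  -- split g u = a c + T u
  have hsplit : ∀ u ∈ Ioo (0:ℝ) r, g u = a c + T u := by
    intro u hu
    have := Summable.sum_add_tsum_nat_add 1 (keyb u hu)
    simp only [Finset.range_one, Finset.sum_singleton] at this
    simp only [hg, hT]
    rw [← this]
    simp
  -- T tends to 0
  have hT0 : Tendsto T (nhdsWithin (0:ℝ) (Set.Ioi 0)) (nhds 0) := by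
    apply squeeze_zero'
    · filter_upwards [hmem] with u hu
      exact tsum_nonneg fun n => mul_nonneg (ha _) (pow_nonneg hu.1.le _)
    · filter_upwards [hmem] with u hu
      show T u ≤ u * M
      have hle : ∀ n : ℕ, a (n + 1 + c) * u ^ (n + 1) ≤ u * (a (n + 1 + c) * r ^ n) := by
        intro n
        have h1 : u ^ (n + 1) = u * u ^ n := by ring
        rw [h1]
        have : u ^ n ≤ r ^ n := pow_le_pow_left₀ hu.1.le hu.2.le n
        calc a (n + 1 + c) * (u * u ^ n) = u * (a (n + 1 + c) * u ^ n) := by ring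
          _ ≤ u * (a (n + 1 + c) * r ^ n) := by
              apply mul_le_mul_of_nonneg_left _ hu.1.le
              exact mul_le_mul_of_nonneg_left this (ha _)
      calc T u ≤ ∑' n : ℕ, u * (a (n + 1 + c) * r ^ n) :=
            Summable.tsum_le_tsum hle (keyb1 u hu) (hSb1.mul_left u)
        _ = u * M := tsum_mul_left
    · have h : Tendsto (fun u : ℝ => u * M) (nhds (0:ℝ)) (nhds (0 * M)) :=
        (continuous_id.mul continuous_const).tendsto (0:ℝ)
      rw [zero_mul] at h
      exact h.mono_left nhdsWithin_le_nhds
  have hgT : Tendsto g (nhdsWithin (0:ℝ) (Set.Ioi 0)) (nhds (a c)) := by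
    have h1 : Tendsto (fun u => a c + T u) (nhdsWithin (0:ℝ) (Set.Ioi 0)) (nhds (a c + 0)) :=
      tendsto_const_nhds.add hT0
    rw [add_zero] at h1
    apply h1.congr'
    filter_upwards [hmem] with u hu
    exact (hsplit u hu).symm
  apply hgT.congr'
  filter_upwards [hmem] with u hu
  -- show g u = tsum / u^c
  have huc : (u:ℝ) ^ c ≠ 0 := pow_ne_zero _ hu.1.ne'
  have h1 := Summable.sum_add_tsum_nat_add c (key u hu)
  have h2 : ∑ i ∈ Finset.range c, a i * u ^ i = 0 := by
    apply Finset.sum_eq_zero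
    intro i hi
    rw [hcmin i (Finset.mem_range.1 hi)]; ring
  have h3 : (∑' n : ℕ, a n * u ^ n) = u ^ c * g u := by
    rw [← h1, h2, zero_add]
    have : ∀ n : ℕ, a (n + c) * u ^ (n + c) = u ^ c * (a (n + c) * u ^ n) := by
      intro n; rw [pow_add]; ring
    simp_rw [this]
    exact tsum_mul_left
  rw [h3]
  exact (mul_div_cancel_left₀ _ huc).symm

/-- Let `c = min {n : a n > 0}`. For each fixed `x ≥ 0`, the EEWPS cdf
`F_λ x = C (λ (1 - exp (-α H x))^β) / C λ` converges to `(1 - exp (-α H x))^(c β)`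
as `λ → 0⁺`: the limiting distribution is EEW(α, cβ). -/
theorem eewps_limit_lambda_zero
    (a : ℕ → ℝ) (s α β : ℝ) (H : ℝ → ℝ) (c : ℕ) (x t : ℝ)
    (ha : ∀ n, 0 ≤ a n) (ha0 : a 0 = 0) (hs : 0 < s)
    (hsum : ∀ u : ℝ, |u| < s → Summable (fun n : ℕ => a n * u ^ n))
    (hc : 0 < a c) (hcmin : ∀ m, m < c → a m = 0)
    (hα : 0 < α) (hβ : 0 < β) (hx : 0 ≤ x) (hH : 0 ≤ H x)
    (ht : t = 1 - Real.exp (-(α * H x))) :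
    Tendsto
      (fun lam : ℝ => (∑' n : ℕ, a n * (lam * t ^ β) ^ n) / (∑' n : ℕ, a n * lam ^ n))
      (nhdsWithin 0 (Set.Ioi 0)) (nhds (t ^ ((c : ℝ) * β))) := by
  have ht0 : 0 ≤ t := by
    rw [ht, sub_nonneg]
    exact Real.exp_le_one_iff.2 (by nlinarith)
  have hc0 : c ≠ 0 := by
    intro h; rw [h, ha0] at hc; exact lt_irrefl 0 hc
  have hcpos : (0:ℝ) < (c:ℝ) := Nat.cast_pos.2 (Nat.pos_of_ne_zero hc0)
  rcases eq_or_lt_of_le ht0 with h0 | hpos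
  · -- t = 0
    have htb : t ^ β = 0 := by rw [← h0, Real.zero_rpow hβ.ne']
    have hnum : ∀ lam : ℝ, (∑' n : ℕ, a n * (lam * t ^ β) ^ n) = 0 := by
      intro lam
      have : (fun n : ℕ => a n * (lam * t ^ β) ^ n) = fun _ => (0:ℝ) := by
        funext n
        cases n with
        | zero => simp [ha0]
        | succ m => rw [htb]; simp
      rw [this, tsum_zero]
    have htgt : t ^ ((c:ℝ) * β) = 0 := by
      rw [← h0, Real.zero_rpow (by positivity)]
    rw [htgt]
    have : (fun lam : ℝ => (∑' n : ℕ, a n * (lam * t ^ β) ^ n) / (∑' n : ℕ, a n * lam ^ n))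
        = fun _ => (0:ℝ) := by
      funext lam; rw [hnum, zero_div]
    rw [this]
    exact tendsto_const_nhds
  · -- t > 0
    set k : ℝ := t ^ β with hkdef
    have hk : 0 < k := Real.rpow_pos_of_pos hpos β
    have hA := eewps_aux a s c ha hs hsum hcmin
    have hcomp : Tendsto (fun lam : ℝ => lam * k)
        (nhdsWithin 0 (Set.Ioi 0)) (nhdsWithin 0 (Set.Ioi 0)) := by
      rw [tendsto_nhdsWithin_iff]
      constructor
      · have h : Tendsto (fun lam : ℝ => lam * k) (nhds (0:ℝ)) (nhds (0 * k)) :=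
          (continuous_id.mul continuous_const).tendsto (0:ℝ)
        rw [zero_mul] at h
        exact h.mono_left nhdsWithin_le_nhds
      · filter_upwards [self_mem_nhdsWithin] with lam hlam
        exact mul_pos hlam hk
    have h1 := hA.comp hcomp
    have h3 := (h1.div hA hc.ne').mul_const (k ^ c)
    have hlim : a c / a c * k ^ c = t ^ ((c:ℝ) * β) := by
      rw [div_self hc.ne', one_mul, hkdef, mul_comm (c:ℝ) β, Real.rpow_mul ht0,
        Real.rpow_natCast]
    rw [hlim] at h3
    apply h3.congr'
    have hmem : Ioo (0:ℝ) s ∈ nhdsWithin (0:ℝ) (Set.Ioi 0) :=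
      Ioo_mem_nhdsGT_of_mem ⟨le_refl 0, hs⟩
    filter_upwards [hmem] with lam hlam
    have hlam0 : lam ≠ 0 := hlam.1.ne'
    have hD : 0 < ∑' n : ℕ, a n * lam ^ n := by
      have hsml : Summable (fun n : ℕ => a n * lam ^ n) :=
        hsum lam (by rw [abs_of_pos hlam.1]; exact hlam.2)
      have h1 : a c * lam ^ c ≤ ∑' n : ℕ, a n * lam ^ n :=
        Summable.le_tsum hsml c (fun j _ => mul_nonneg (ha j) (pow_nonneg hlam.1.le j))
      have : 0 < a c * lam ^ c := mul_pos hc (pow_pos hlam.1 c)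
      linarith
    show (∑' n : ℕ, a n * (lam * k) ^ n) / (lam * k) ^ c /
        ((∑' n : ℕ, a n * lam ^ n) / lam ^ c) * k ^ c
      = (∑' n : ℕ, a n * (lam * k) ^ n) / (∑' n : ℕ, a n * lam ^ n)
    rw [mul_pow]
    field_simp
end

section
/- Let X have EEW(α, nβ) distribution with density g_n(x) = nαβ h(x) e^{-αH(x)}(1-e^{-αH(x)})^{nβ-1}. Then its Laplace transform satisfies L_n(s) = Σ_{j=0}^∞ binom(nβ, j+1) (-1)^j L^{(j)}(s), where L^{(j)}(s) is the Laplace transform of the EEW(α(j+1), 1) distribution (density α(j+1) h(x) e^{-α(j+1)H(x)}). -/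
/-!
Put `u = exp (-α H x) ∈ (0, 1]`. The EEW(α, nβ) density is `α h x · r u (1 - u)^(r - 1)` with
`r = nβ`, and the binomial series for `(1 - u)^(r - 1)` together with the absorption identity
`(j + 1) binom r (j + 1) = r binom (r - 1) j` turns `r u (1 - u)^(r - 1)` into
`∑ j, binom r (j + 1) (-1)^j (j + 1) u^(j + 1)`; the `j`-th term times `α h x` is
`binom r (j + 1) (-1)^j` times the EEW(α(j + 1), 1) density. Where `H x = 0` we have `u = 1`
and the series need not converge, but there also `h x = 0`, since `x` is a minimum of `H ≥ 0`.
Absolute summability of the Laplace transforms lets the series be integrated term by term.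
-/

open MeasureTheory Set

/-- Generalized binomial coefficient `binom r k = r (r-1) ⋯ (r-k+1) / k!`. -/
noncomputable def genBinom (r : ℝ) (k : ℕ) : ℝ :=
  (∏ i ∈ Finset.range k, (r - i)) / (Nat.factorial k)

theorem genBinom_eq_choose (r : ℝ) (k : ℕ) : genBinom r k = Ring.choose r k := by
  rw [Ring.choose_eq_smul, smul_eq_mul, ← Polynomial.aeval_eq_smeval, Polynomial.aeval_def,
    ← Polynomial.eval_map, descPochhammer_map, descPochhammer_eval_eq_prod_range, genBinom,
    div_eq_inv_mul]

theorem Real.hasSum_choose_mul_pow (a : ℝ) {y : ℝ} (hy : |y| < 1) :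
    HasSum (fun k => Ring.choose a k * y ^ k) ((1 + y) ^ a) := by
  have hy' : y ∈ Metric.eball (0 : ℝ) 1 := by
    rw [← ENNReal.ofReal_one, Metric.eball_ofReal]
    simpa using hy
  simpa [binomialSeries, FormalMultilinearSeries.coeff_ofScalars, mul_comm] using
    (Real.one_add_rpow_hasFPowerSeriesOnBall_zero (a := a)).hasSum hy'

theorem Ring.succ_mul_choose_succ {R : Type*} [Ring R] [BinomialRing R] (r : R) (j : ℕ) :
    ((j : R) + 1) * Ring.choose r (j + 1) = r * Ring.choose (r - 1) j := by
  simpa [add_comm] using Ring.choose_add_smul_choose (r - 1) j 1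

theorem Real.hasSum_choose_succ_mul_succ_mul_pow_succ (r : ℝ) {u : ℝ} (hu : |u| < 1) :
    HasSum (fun j : ℕ => Ring.choose r (j + 1) * (-1) ^ j * ((j + 1) * u ^ (j + 1)))
      (r * u * (1 - u) ^ (r - 1)) := by
  have hseries := (Real.hasSum_choose_mul_pow (r - 1) (y := -u) (by rwa [abs_neg])).mul_left
    (r * u)
  rw [← sub_eq_add_neg] at hseries
  refine hseries.congr_fun fun j => ?_
  linear_combination (-1) ^ j * u ^ (j + 1) * Ring.succ_mul_choose_succ r j

theorem hasSum_choose_mul_eewDensity (r : ℝ) {α H h : ℝ} (hα : 0 < α) (hH : 0 ≤ H)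
    (hh : H = 0 → h = 0) :
    HasSum (fun j : ℕ => Ring.choose r (j + 1) * (-1) ^ j *
        (α * (j + 1) * h * Real.exp (-(α * (j + 1) * H))))
      (r * α * h * Real.exp (-(α * H)) * (1 - Real.exp (-(α * H))) ^ (r - 1)) := by
  rcases hH.eq_or_lt with hH0 | hHpos
  · simp [hh hH0.symm]
  have hpow (j : ℕ) : Real.exp (-(α * (j + 1) * H)) = Real.exp (-(α * H)) ^ (j + 1) := by
    rw [← Real.exp_nat_mul]
    push_cast
    ring_nf
  have hu : |Real.exp (-(α * H))| < 1 := by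
    rw [abs_of_pos (Real.exp_pos _), Real.exp_lt_one_iff]
    nlinarith
  have hseries := (Real.hasSum_choose_succ_mul_succ_mul_pow_succ r hu).mul_left (α * h)
  rw [show ∀ v : ℝ, α * h * (r * Real.exp (-(α * H)) * v) = r * α * h * Real.exp (-(α * H)) * v
    by intro v; ring] at hseries
  refine hseries.congr_fun fun j => ?_
  rw [hpow]
  ring

theorem hasSum_mul_integral_of_ae_hasSum {X ι : Type*} [MeasurableSpace X] {μ : Measure X}
    [Countable ι] {c : ι → ℝ} {g : ι → X → ℝ} {f : X → ℝ}
    (hg_int : ∀ i, Integrable (g i) μ) (hg_nonneg : ∀ i, 0 ≤ᵐ[μ] g i)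
    (hsum : Summable fun i => |c i| * ∫ x, g i x ∂μ)
    (hf : ∀ᵐ x ∂μ, HasSum (fun i => c i * g i x) (f x)) :
    HasSum (fun i => c i * ∫ x, g i x ∂μ) (∫ x, f x ∂μ) := by
  have hnorm (i : ι) : ∫ x, ‖c i * g i x‖ ∂μ = |c i| * ∫ x, g i x ∂μ := by
    rw [← integral_const_mul]
    refine integral_congr_ae ?_
    filter_upwards [hg_nonneg i] with x hx
    rw [Real.norm_eq_abs, abs_mul, abs_of_nonneg hx]
  have hterms := hasSum_integral_of_summable_integral_norm
    (fun i => (hg_int i).const_mul (c i)) (hsum.congr fun i => (hnorm i).symm)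
  simp only [integral_const_mul] at hterms
  rwa [integral_congr_ae (hf.mono fun x hx => hx.tsum_eq)] at hterms

theorem eew_laplace_series_general
    (α β s : ℝ) (n : ℕ) (H h : ℝ → ℝ)
    (hα : 0 < α)
    (hh : ∀ x, 0 < x → HasDerivAt H (h x) x)
    (hHnonneg : ∀ x, 0 ≤ x → 0 ≤ H x)
    (hhpos : ∀ x, 0 < x → 0 ≤ h x)
    (hint : ∀ j : ℕ, IntegrableOn
      (fun x => Real.exp (-(s * x)) *
        (α * (j + 1) * h x * Real.exp (-(α * (j + 1) * H x)))) (Set.Ioi 0))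
    (habs : Summable (fun j : ℕ => |genBinom ((n : ℝ) * β) (j + 1)| *
      ∫ x in Set.Ioi (0 : ℝ), Real.exp (-(s * x)) *
        (α * (j + 1) * h x * Real.exp (-(α * (j + 1) * H x))))) :
    HasSum
      (fun j : ℕ => genBinom ((n : ℝ) * β) (j + 1) * (-1) ^ j *
        ∫ x in Set.Ioi (0 : ℝ), Real.exp (-(s * x)) *
          (α * (j + 1) * h x * Real.exp (-(α * (j + 1) * H x))))
      (∫ x in Set.Ioi (0 : ℝ), Real.exp (-(s * x)) *
        ((n : ℝ) * α * β * h x * Real.exp (-(α * H x)) *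
          (1 - Real.exp (-(α * H x))) ^ ((n : ℝ) * β - 1))) := by
  simp only [genBinom_eq_choose] at habs ⊢
  refine hasSum_mul_integral_of_ae_hasSum hint (fun j => ?_)
    (by simpa only [abs_mul, abs_pow, abs_neg, abs_one, one_pow, mul_one] using habs) ?_
  · filter_upwards [ae_restrict_mem measurableSet_Ioi] with x (hx : 0 < x)
    have := hhpos x hx
    positivity
  · filter_upwards [ae_restrict_mem measurableSet_Ioi] with x (hx : 0 < x)
    have hmin (hH0 : H x = 0) : IsLocalMin H x := by
      filter_upwards [Ioi_mem_nhds hx] with y (hy : 0 < y)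
      rw [hH0]
      exact hHnonneg y hy.le
    have hseries := (hasSum_choose_mul_eewDensity ((n : ℝ) * β) hα (hHnonneg x hx.le)
      fun hH0 => (hmin hH0).hasDerivAt_eq_zero (hh x hx)).mul_left (Real.exp (-(s * x)))
    rw [show ∀ v : ℝ, n * β * α * h x * v = n * α * β * h x * v by intro v; ring] at hseries
    exact hseries.congr_fun fun j => by ring

/-- For `X ∼ EEW(α, nβ)` with density
`g_n x = n α β h x exp (-α H x) (1 - exp (-α H x))^(n β - 1)`, the Laplace transform
satisfies `L_n s = ∑_{j≥0} binom (nβ) (j+1) (-1)^j L^(j) s`, where `L^(j)` is the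
Laplace transform of EEW(α(j+1), 1) with density `α (j+1) h x exp (-α (j+1) H x)`. -/
theorem eew_laplace_series
    (α β s : ℝ) (n : ℕ) (H h : ℝ → ℝ)
    (hα : 0 < α) (hβ : 0 < β) (hn : 1 ≤ n) (hs : 0 ≤ s)
    (hh : ∀ x, 0 < x → HasDerivAt H (h x) x)
    (hHnonneg : ∀ x, 0 ≤ x → 0 ≤ H x)
    (hhpos : ∀ x, 0 < x → 0 ≤ h x)
    (hint : ∀ j : ℕ, IntegrableOn
      (fun x => Real.exp (-(s * x)) *
        (α * (j + 1) * h x * Real.exp (-(α * (j + 1) * H x)))) (Set.Ioi 0))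
    (habs : Summable (fun j : ℕ => |genBinom ((n : ℝ) * β) (j + 1)| *
      ∫ x in Set.Ioi (0 : ℝ), Real.exp (-(s * x)) *
        (α * (j + 1) * h x * Real.exp (-(α * (j + 1) * H x))))) :
    HasSum
      (fun j : ℕ => genBinom ((n : ℝ) * β) (j + 1) * (-1) ^ j *
        ∫ x in Set.Ioi (0 : ℝ), Real.exp (-(s * x)) *
          (α * (j + 1) * h x * Real.exp (-(α * (j + 1) * H x))))
      (∫ x in Set.Ioi (0 : ℝ), Real.exp (-(s * x)) *
        ((n : ℝ) * α * β * h x * Real.exp (-(α * H x)) *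
          (1 - Real.exp (-(α * H x))) ^ ((n : ℝ) * β - 1))) :=
  eew_laplace_series_general α β s n H h hα hh hHnonneg hhpos hint habs
end
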